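/- arXiv:1207.1760 — 2 statements merged into one kernel-verified Lean document; each statement's English description precedes it below -/
import Mathlib

section
/- Let 0 < p < 1, 0 < β < 1, σ > 0, μ > 0, and let B, Z₀, Z₁ be independent random variables on a probability space with P(B = 1) = p = 1 − P(B = 0), Z₀ ~ N(0, μ), Z₁ ~ N(0, σ² + μ). Put Q = Z₁ if B = 1 and Q = Z₀ if B = 0, and let τ′ = 2 · ((σ² + μ)/(σ²/μ)) · ln( β(1 − p) · √(σ²/μ + 1) / ((1 − β)p) ). Assume τ′ ≥ 0, and let b̂(q) = 1 if q² > τ′ and b̂(q) = 0 otherwise. Then E[ β · 1_{b̂(Q) = 1, B = 0} + (1 − β) · 1_{b̂(Q) = 0, B = 1} ] = β(1 − p) · erfc(√(τ′/(2μ))) + (1 − β)p · erf(√(τ′/(2(σ² + μ)))). -/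
open MeasureTheory ProbabilityTheory Real

/-- The Gauss error function `erf x = (2/√π) ∫₀ˣ e^{−t²} dt`. -/
noncomputable def erf (x : ℝ) : ℝ :=
  (2 / Real.sqrt Real.pi) * ∫ t in (0:ℝ)..x, Real.exp (-t ^ 2)

/-- The complementary error function `erfc = 1 − erf`. -/
noncomputable def erfc (x : ℝ) : ℝ := 1 - erf x

/-!
On `{B = 0}` the detector errs exactly when `Z₀² > τ′`, on `{B = 1}` exactly when `Z₁² ≤ τ′`.
By independence each error event has probability `P(B = b)` times the `N(0, v)`-mass of
`{x² ≤ τ′}` or of its complement. That mass is an `erf` value because `N(0, v)` is the image of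
`N(0, 1/2)`, whose density is `e^{-x²}/√π`, under `x ↦ √(2v) x`.
-/

theorem intervalIntegral.integral_neg_self_eq_two_mul_of_even {f : ℝ → ℝ} (hf : Continuous f)
    (heven : ∀ x, f (-x) = f x) (c : ℝ) :
    ∫ x in -c..c, f x = 2 * ∫ x in (0:ℝ)..c, f x := by
  have hleft : ∫ x in -c..0, f x = ∫ x in (0:ℝ)..c, f x := by
    simpa [heven] using (intervalIntegral.integral_comp_neg (a := 0) (b := c) f).symm
  rw [← intervalIntegral.integral_add_adjacent_intervals (b := 0)
    (hf.intervalIntegrable _ _) (hf.intervalIntegrable _ _), hleft, two_mul]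

lemma gaussianPDFReal_zero_inv_two : gaussianPDFReal 0 2⁻¹ = fun x => (√π)⁻¹ * exp (-x ^ 2) := by
  ext x
  rw [gaussianPDFReal, NNReal.coe_inv, NNReal.coe_ofNat, sub_zero]
  field_simp

lemma gaussianReal_zero_inv_two_real_Icc_neg {c : ℝ} (hc : 0 ≤ c) :
    (gaussianReal 0 2⁻¹).real (Set.Icc (-c) c) = erf c := by
  rw [measureReal_def, gaussianReal_apply_eq_integral 0 (by norm_num),
    ENNReal.toReal_ofReal
      (setIntegral_nonneg measurableSet_Icc fun x _ ↦ gaussianPDFReal_nonneg _ _ x),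
    gaussianPDFReal_zero_inv_two, integral_Icc_eq_integral_Ioc,
    ← intervalIntegral.integral_of_le (by linarith),
    intervalIntegral.integral_neg_self_eq_two_mul_of_even (by fun_prop) (by simp),
    intervalIntegral.integral_const_mul, erf]
  ring

lemma gaussianReal_zero_eq_map_mul (v : NNReal) :
    gaussianReal 0 v = (gaussianReal 0 2⁻¹).map (√(2 * v) * ·) := by
  rw [gaussianReal_map_const_mul, mul_zero]
  congr 1
  ext
  simp only [NNReal.coe_mul, NNReal.coe_mk, NNReal.coe_inv, NNReal.coe_ofNat,
    Real.sq_sqrt (by positivity : (0:ℝ) ≤ 2 * v)]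
  ring

lemma gaussianReal_zero_real_sq_le (v : NNReal) (hv : v ≠ 0) {a : ℝ} (ha : 0 ≤ a) :
    (gaussianReal 0 v).real {x | x ^ 2 ≤ a} = erf √(a / (2 * v)) := by
  have h2v : (0:ℝ) < 2 * v := by positivity
  have hpre : (√(2 * v) * ·) ⁻¹' {x : ℝ | x ^ 2 ≤ a}
      = Set.Icc (-√(a / (2 * v))) √(a / (2 * v)) := by
    ext y
    rw [Set.mem_preimage, Set.mem_ofPred_eq, Set.mem_Icc, ← Real.sq_le (div_nonneg ha h2v.le),
      le_div_iff₀ h2v, mul_pow, Real.sq_sqrt h2v.le, mul_comm]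
  rw [gaussianReal_zero_eq_map_mul, map_measureReal_apply (by fun_prop)
    (measurableSet_le (by fun_prop) measurable_const), hpre,
    gaussianReal_zero_inv_two_real_Icc_neg (Real.sqrt_nonneg _)]

lemma gaussianReal_zero_real_lt_sq (v : NNReal) (hv : v ≠ 0) {a : ℝ} (ha : 0 ≤ a) :
    (gaussianReal 0 v).real {x | a < x ^ 2} = erfc √(a / (2 * v)) := by
  have hcompl : {x : ℝ | a < x ^ 2} = {x | x ^ 2 ≤ a}ᶜ := by ext; simp
  rw [hcompl, probReal_compl_eq_one_sub (measurableSet_le (by fun_prop) measurable_const),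
    gaussianReal_zero_real_sq_le v hv ha, erfc]

lemma ProbabilityTheory.IndepFun.measureReal_preimage_inter_eq_mul_of_map_eq
    {Ω α γ : Type*} [MeasurableSpace Ω] [MeasurableSpace α] [MeasurableSpace γ]
    {P : Measure Ω} {B : Ω → α} {Z : Ω → γ} {ν : Measure γ} (hind : IndepFun B Z P)
    (hZ : Measurable Z) (hlaw : P.map Z = ν) {s : Set α} {t : Set γ}
    (hs : MeasurableSet s) (ht : MeasurableSet t) :
    P.real (B ⁻¹' s ∩ Z ⁻¹' t) = P.real (B ⁻¹' s) * ν.real t := by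
  rw [measureReal_def, hind.measure_inter_preimage_eq_mul _ _ hs ht, ENNReal.toReal_mul, ← hlaw,
    map_measureReal_apply hZ ht]
  rfl

theorem mmwse_threshold_expected_weighted_error_general
    {Ω : Type*} [MeasurableSpace Ω] (P : Measure Ω) [IsProbabilityMeasure P]
    (p β : ℝ) (hp : 0 < p) (hp1 : p < 1)
    (σ μ : NNReal) (hμ : 0 < μ)
    (B Z₀ Z₁ : Ω → ℝ) (hB : Measurable B) (hZ₀ : Measurable Z₀) (hZ₁ : Measurable Z₁)
    (hindep : iIndepFun ![B, Z₀, Z₁] P)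
    (hB1 : P {ω | B ω = 1} = ENNReal.ofReal p)
    (hB0 : P {ω | B ω = 0} = ENNReal.ofReal (1 - p))
    (hZ₀law : Measure.map Z₀ P = gaussianReal 0 μ)
    (hZ₁law : Measure.map Z₁ P = gaussianReal 0 (σ ^ 2 + μ))
    (Q : Ω → ℝ) (hQ : Q = fun ω => if B ω = 1 then Z₁ ω else Z₀ ω)
    (τ' : ℝ)
    (hτ'0 : 0 ≤ τ')
    (bhat : ℝ → ℝ) (hbhat : bhat = fun q => if τ' < q ^ 2 then 1 else 0) :
    ∫ ω, (β * (if bhat (Q ω) = 1 ∧ B ω = 0 then 1 else 0)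
        + (1 - β) * (if bhat (Q ω) = 0 ∧ B ω = 1 then 1 else 0)) ∂P
      = β * (1 - p) * erfc (Real.sqrt (τ' / (2 * μ)))
        + (1 - β) * p * erf (Real.sqrt (τ' / (2 * ((σ:ℝ) ^ 2 + μ)))) := by
  have hind₀ : IndepFun B Z₀ P := hindep.indepFun (i := 0) (j := 1) (by decide)
  have hind₁ : IndepFun B Z₁ P := hindep.indepFun (i := 0) (j := 2) (by decide)
  set A := B ⁻¹' {0} ∩ Z₀ ⁻¹' {x | τ' < x ^ 2}
  set C := B ⁻¹' {1} ∩ Z₁ ⁻¹' {x | x ^ 2 ≤ τ'}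
  have hmA : MeasurableSet A := (hB (measurableSet_singleton 0)).inter
    (hZ₀ (measurableSet_lt measurable_const (by fun_prop)))
  have hmC : MeasurableSet C := (hB (measurableSet_singleton 1)).inter
    (hZ₁ (measurableSet_le (by fun_prop) measurable_const))
  have hintegrand : ∀ ω, β * (if bhat (Q ω) = 1 ∧ B ω = 0 then 1 else 0)
        + (1 - β) * (if bhat (Q ω) = 0 ∧ B ω = 1 then 1 else 0)
      = A.indicator (fun _ => β) ω + C.indicator (fun _ => 1 - β) ω := by
    intro ω
    subst hQ hbhat
    by_cases h1 : B ω = 1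
    · by_cases h : τ' < Z₁ ω ^ 2 <;> simp [A, C, Set.indicator, h1, h]
    · by_cases h : τ' < Z₀ ω ^ 2 <;> simp [A, C, Set.indicator, h1, h]
  have hP0 : P.real (B ⁻¹' {0}) = 1 - p :=
    (congrArg ENNReal.toReal hB0).trans (ENNReal.toReal_ofReal (by linarith))
  have hP1 : P.real (B ⁻¹' {1}) = p :=
    (congrArg ENNReal.toReal hB1).trans (ENNReal.toReal_ofReal hp.le)
  have hA : P.real A = (1 - p) * erfc √(τ' / (2 * μ)) := by
    rw [hind₀.measureReal_preimage_inter_eq_mul_of_map_eq hZ₀ hZ₀law (measurableSet_singleton 0)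
      (measurableSet_lt measurable_const (by fun_prop)), gaussianReal_zero_real_lt_sq μ hμ.ne' hτ'0,
      hP0]
  have hC : P.real C = p * erf √(τ' / (2 * ((σ:ℝ) ^ 2 + μ))) := by
    rw [hind₁.measureReal_preimage_inter_eq_mul_of_map_eq hZ₁ hZ₁law (measurableSet_singleton 1)
      (measurableSet_le (by fun_prop) measurable_const),
      gaussianReal_zero_real_sq_le _ (by positivity) hτ'0, hP1, NNReal.coe_add, NNReal.coe_pow]
  rw [integral_congr_ae (ae_of_all _ hintegrand),
    integral_add ((integrable_const β).indicator hmA) ((integrable_const (1 - β)).indicator hmC),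
    integral_indicator_const _ hmA, integral_indicator_const _ hmC, hA, hC, smul_eq_mul,
    smul_eq_mul]
  ring

/-- **Corollary 3, part 1 (per-coordinate MMWSE).**  In the sparse Gaussian mixture model,
the expected weighted-support error of the threshold detector `b̂(q) = 1_{q² > τ′}` equals
`β (1 − p) erfc(√(τ′/(2μ))) + (1 − β) p erf(√(τ′/(2(σ² + μ))))`. -/
theorem mmwse_threshold_expected_weighted_error
    {Ω : Type*} [MeasurableSpace Ω] (P : Measure Ω) [IsProbabilityMeasure P]
    (p β : ℝ) (hp : 0 < p) (hp1 : p < 1) (hβ : 0 < β) (hβ1 : β < 1)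
    (σ μ : NNReal) (hσ : 0 < σ) (hμ : 0 < μ)
    (B Z₀ Z₁ : Ω → ℝ) (hB : Measurable B) (hZ₀ : Measurable Z₀) (hZ₁ : Measurable Z₁)
    (hindep : iIndepFun ![B, Z₀, Z₁] P)
    (hB1 : P {ω | B ω = 1} = ENNReal.ofReal p)
    (hB0 : P {ω | B ω = 0} = ENNReal.ofReal (1 - p))
    (hZ₀law : Measure.map Z₀ P = gaussianReal 0 μ)
    (hZ₁law : Measure.map Z₁ P = gaussianReal 0 (σ ^ 2 + μ))
    (Q : Ω → ℝ) (hQ : Q = fun ω => if B ω = 1 then Z₁ ω else Z₀ ω)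
    (τ' : ℝ)
    (hτ' : τ' = 2 * (((σ:ℝ) ^ 2 + μ) / ((σ:ℝ) ^ 2 / μ))
        * Real.log (β * (1 - p) * Real.sqrt ((σ:ℝ) ^ 2 / μ + 1) / ((1 - β) * p)))
    (hτ'0 : 0 ≤ τ')
    (bhat : ℝ → ℝ) (hbhat : bhat = fun q => if τ' < q ^ 2 then 1 else 0) :
    ∫ ω, (β * (if bhat (Q ω) = 1 ∧ B ω = 0 then 1 else 0)
        + (1 - β) * (if bhat (Q ω) = 0 ∧ B ω = 1 then 1 else 0)) ∂P
      = β * (1 - p) * erfc (Real.sqrt (τ' / (2 * μ)))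
        + (1 - β) * p * erf (Real.sqrt (τ' / (2 * ((σ:ℝ) ^ 2 + μ)))) :=
  mmwse_threshold_expected_weighted_error_general P p β hp hp1 σ μ hμ B Z₀ Z₁ hB hZ₀ hZ₁ hindep hB1
    hB0 hZ₀law hZ₁law Q hQ τ' hτ'0 bhat hbhat
end

section
/- Let 0 < p < 1, 0 < β < 1, σ > 0, μ > 0, and let B, Z₀, Z₁ be independent random variables on a probability space with P(B = 1) = p = 1 − P(B = 0), Z₀ ~ N(0, μ), Z₁ ~ N(0, σ² + μ). Put Q = Z₁ if B = 1 and Q = Z₀ if B = 0, and let τ′ = 2 · ((σ² + μ)/(σ²/μ)) · ln( β(1 − p) · √(σ²/μ + 1) / ((1 − β)p) ). Assume τ′ ≥ 0. Then the false positive rate of the threshold detector equals P(Q² > τ′ | B = 0) = erfc(√(τ′/(2μ))), and the false negative rate equals P(Q² ≤ τ′ | B = 1) = erf(√(τ′/(2(σ² + μ)))). -/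
/-!
Since `B` is independent of `Z₀` and `Z₁`, and `Q = Z_b` on the event `B = b`, the conditional
probabilities are the unconditional probabilities `P(Z₀² > τ′)` and `P(Z₁² ≤ τ′)`. For
`Z ~ N(0, v)` the event `Z² ≤ s` is `|Z| ≤ √s`, and the substitution `t = x / √(2v)` together with
the evenness of `e^{−t²}` turns its probability into `erf(√(s / 2v))`.
-/

open MeasureTheory ProbabilityTheory Real

lemma erf_nonneg {x : ℝ} (hx : 0 ≤ x) : 0 ≤ erf x :=
  mul_nonneg (by positivity) (intervalIntegral.integral_nonneg hx fun t _ => (exp_pos _).le)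

lemma integral_exp_neg_sq_from_neg (b : ℝ) :
    ∫ t in -b..b, exp (-t ^ 2) = 2 * ∫ t in (0:ℝ)..b, exp (-t ^ 2) := by
  have hint : ∀ a c : ℝ, IntervalIntegrable (fun t => exp (-t ^ 2)) volume a c := fun _ _ =>
    (by fun_prop : Continuous fun t : ℝ => exp (-t ^ 2)).intervalIntegrable _ _
  have hreflect : ∫ t in -b..0, exp (-t ^ 2) = ∫ t in (0:ℝ)..b, exp (-t ^ 2) := by
    have := intervalIntegral.integral_comp_neg (a := 0) (b := b) fun t => exp (-t ^ 2)
    simp only [even_two.neg_pow, neg_zero] at this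
    exact this.symm
  rw [← intervalIntegral.integral_add_adjacent_intervals (hint _ 0) (hint 0 _), hreflect, two_mul]

lemma integral_gaussianPDFReal_from_neg {v : NNReal} (hv : v ≠ 0) (a : ℝ) :
    ∫ x in -a..a, gaussianPDFReal 0 v x = erf (a / √(2 * v)) := by
  have hc : √(2 * (v : ℝ)) ≠ 0 := by positivity
  have hpdf : ∀ x, gaussianPDFReal 0 v x = (√(2 * π * v))⁻¹ * exp (-(x / √(2 * v)) ^ 2) := by
    intro x
    rw [gaussianPDFReal, div_pow, sq_sqrt (by positivity), sub_zero, neg_div]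
  have hsqrt : √(2 * π * v) = √π * √(2 * v) := by
    rw [← sqrt_mul pi_pos.le]; ring_nf
  simp_rw [hpdf]
  rw [intervalIntegral.integral_const_mul,
    intervalIntegral.integral_comp_div (fun t => exp (-t ^ 2)) hc, neg_div,
    integral_exp_neg_sq_from_neg, erf, smul_eq_mul, hsqrt]
  field_simp

lemma gaussianReal_setOf_sq_le {v : NNReal} (hv : v ≠ 0) (s : ℝ) :
    gaussianReal 0 v {x | x ^ 2 ≤ s} = ENNReal.ofReal (erf √(s / (2 * v))) := by
  rcases lt_or_ge s 0 with hs | hs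
  · have hempty : {x : ℝ | x ^ 2 ≤ s} = ∅ :=
      Set.eq_empty_of_forall_notMem fun x hx => (hs.trans_le (sq_nonneg x)).not_ge hx
    rw [hempty, sqrt_eq_zero'.2 (div_nonpos_of_nonpos_of_nonneg hs.le (by positivity))]
    simp [erf]
  have hIcc : {x : ℝ | x ^ 2 ≤ s} = Set.Icc (-√s) √s := by
    ext x
    rw [Set.mem_ofPred_eq, Set.mem_Icc, ← abs_le, ← sqrt_le_sqrt_iff hs, sqrt_sq_eq_abs]
  rw [hIcc, gaussianReal_apply_eq_integral _ hv, integral_Icc_eq_integral_Ioc,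
    ← intervalIntegral.integral_of_le (by simp [sqrt_nonneg]),
    integral_gaussianPDFReal_from_neg hv, sqrt_div hs]

lemma gaussianReal_setOf_lt_sq {v : NNReal} (hv : v ≠ 0) (s : ℝ) :
    gaussianReal 0 v {x | s < x ^ 2} = ENNReal.ofReal (erfc √(s / (2 * v))) := by
  have hcompl : {x : ℝ | s < x ^ 2} = {x | x ^ 2 ≤ s}ᶜ := by
    ext x; simp
  rw [hcompl, prob_compl_eq_one_sub (measurableSet_le (by fun_prop) measurable_const),
    gaussianReal_setOf_sq_le hv, erfc, ENNReal.ofReal_sub _ (erf_nonneg (sqrt_nonneg _)),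
    ENNReal.ofReal_one]

lemma ProbabilityTheory.IndepFun.measure_inter_preimage_div {Ω α β : Type*}
    [MeasurableSpace Ω] [MeasurableSpace α] [MeasurableSpace β] {P : Measure Ω} {X : Ω → α}
    {Y : Ω → β} (hXY : IndepFun X Y P)
    (hX : AEMeasurable X P) {A : Set α} {S : Set β} (hA : MeasurableSet A) (hS : MeasurableSet S)
    (hS0 : P (Y ⁻¹' S) ≠ 0) (hStop : P (Y ⁻¹' S) ≠ ⊤) :
    P (X ⁻¹' A ∩ Y ⁻¹' S) / P (Y ⁻¹' S) = P.map X A := by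
  rw [hXY.measure_inter_preimage_eq_mul _ _ hA hS, ENNReal.mul_div_cancel_right hS0 hStop,
    Measure.map_apply_of_aemeasurable hX hA]

theorem mmwse_false_positive_false_negative_rates_general
    {Ω : Type*} [MeasurableSpace Ω] (P : Measure Ω)
    (p : ℝ) (hp : 0 < p) (hp1 : p < 1)
    (σ μ : NNReal) (hμ : 0 < μ)
    (B Z₀ Z₁ : Ω → ℝ)
    (hindep : iIndepFun ![B, Z₀, Z₁] P)
    (hB1 : P {ω | B ω = 1} = ENNReal.ofReal p)
    (hB0 : P {ω | B ω = 0} = ENNReal.ofReal (1 - p))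
    (hZ₀law : Measure.map Z₀ P = gaussianReal 0 μ)
    (hZ₁law : Measure.map Z₁ P = gaussianReal 0 (σ ^ 2 + μ))
    (Q : Ω → ℝ) (hQ : Q = fun ω => if B ω = 1 then Z₁ ω else Z₀ ω)
    (τ' : ℝ) :
    P ({ω | τ' < Q ω ^ 2} ∩ {ω | B ω = 0}) / P {ω | B ω = 0}
        = ENNReal.ofReal (erfc (Real.sqrt (τ' / (2 * μ))))
      ∧ P ({ω | Q ω ^ 2 ≤ τ'} ∩ {ω | B ω = 1}) / P {ω | B ω = 1}
        = ENNReal.ofReal (erf (Real.sqrt (τ' / (2 * ((σ:ℝ) ^ 2 + μ))))) := by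
  subst hQ
  have hind₀ : IndepFun Z₀ B P := hindep.indepFun (i := 1) (j := 0) (by decide)
  have hind₁ : IndepFun Z₁ B P := hindep.indepFun (i := 2) (j := 0) (by decide)
  have hset₀ : {ω | τ' < (if B ω = 1 then Z₁ ω else Z₀ ω) ^ 2} ∩ {ω | B ω = 0}
      = Z₀ ⁻¹' {x | τ' < x ^ 2} ∩ B ⁻¹' {0} := by
    ext ω; by_cases h : B ω = 0 <;> simp [h]
  have hset₁ : {ω | (if B ω = 1 then Z₁ ω else Z₀ ω) ^ 2 ≤ τ'} ∩ {ω | B ω = 1}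
      = Z₁ ⁻¹' {x | x ^ 2 ≤ τ'} ∩ B ⁻¹' {1} := by
    ext ω; by_cases h : B ω = 1 <;> simp [h]
  have hZ₀ : AEMeasurable Z₀ P := .of_map_ne_zero (hZ₀law ▸ NeZero.ne _)
  have hZ₁ : AEMeasurable Z₁ P := .of_map_ne_zero (hZ₁law ▸ NeZero.ne _)
  constructor
  · calc _ = P (Z₀ ⁻¹' {x | τ' < x ^ 2} ∩ B ⁻¹' {0}) / P (B ⁻¹' {0}) := by rw [hset₀]; rfl
      _ = gaussianReal 0 μ {x | τ' < x ^ 2} := by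
        rw [← hZ₀law]
        exact hind₀.measure_inter_preimage_div hZ₀
          (measurableSet_lt measurable_const (continuous_pow 2).measurable)
          (measurableSet_singleton 0) (by simp [Set.preimage, hB0, hp1])
          (by simp [Set.preimage, hB0])
      _ = _ := gaussianReal_setOf_lt_sq hμ.ne' τ'
  · calc _ = P (Z₁ ⁻¹' {x | x ^ 2 ≤ τ'} ∩ B ⁻¹' {1}) / P (B ⁻¹' {1}) := by rw [hset₁]; rfl
      _ = gaussianReal 0 (σ ^ 2 + μ) {x | x ^ 2 ≤ τ'} := by
        rw [← hZ₁law]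
        exact hind₁.measure_inter_preimage_div hZ₁
          (measurableSet_le (continuous_pow 2).measurable measurable_const)
          (measurableSet_singleton 1) (by simp [Set.preimage, hB1, hp])
          (by simp [Set.preimage, hB1])
      _ = _ := by rw [gaussianReal_setOf_sq_le (by positivity)]; norm_cast

/-- **Corollary 3, part 2 (ROC rates).**  In the sparse Gaussian mixture model with
threshold `τ′ ≥ 0`, the false positive rate equals `P(Q² > τ′ | B = 0) = erfc(√(τ′/(2μ)))`
and the false negative rate equals `P(Q² ≤ τ′ | B = 1) = erf(√(τ′/(2(σ² + μ))))`. -/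
theorem mmwse_false_positive_false_negative_rates
    {Ω : Type*} [MeasurableSpace Ω] (P : Measure Ω) [IsProbabilityMeasure P]
    (p β : ℝ) (hp : 0 < p) (hp1 : p < 1) (hβ : 0 < β) (hβ1 : β < 1)
    (σ μ : NNReal) (hσ : 0 < σ) (hμ : 0 < μ)
    (B Z₀ Z₁ : Ω → ℝ) (hB : Measurable B) (hZ₀ : Measurable Z₀) (hZ₁ : Measurable Z₁)
    (hindep : iIndepFun ![B, Z₀, Z₁] P)
    (hB1 : P {ω | B ω = 1} = ENNReal.ofReal p)
    (hB0 : P {ω | B ω = 0} = ENNReal.ofReal (1 - p))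
    (hZ₀law : Measure.map Z₀ P = gaussianReal 0 μ)
    (hZ₁law : Measure.map Z₁ P = gaussianReal 0 (σ ^ 2 + μ))
    (Q : Ω → ℝ) (hQ : Q = fun ω => if B ω = 1 then Z₁ ω else Z₀ ω)
    (τ' : ℝ)
    (hτ' : τ' = 2 * (((σ:ℝ) ^ 2 + μ) / ((σ:ℝ) ^ 2 / μ))
        * Real.log (β * (1 - p) * Real.sqrt ((σ:ℝ) ^ 2 / μ + 1) / ((1 - β) * p)))
    (hτ'0 : 0 ≤ τ') :
    P ({ω | τ' < Q ω ^ 2} ∩ {ω | B ω = 0}) / P {ω | B ω = 0}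
        = ENNReal.ofReal (erfc (Real.sqrt (τ' / (2 * μ))))
      ∧ P ({ω | Q ω ^ 2 ≤ τ'} ∩ {ω | B ω = 1}) / P {ω | B ω = 1}
        = ENNReal.ofReal (erf (Real.sqrt (τ' / (2 * ((σ:ℝ) ^ 2 + μ))))) :=
  mmwse_false_positive_false_negative_rates_general P p hp hp1 σ μ hμ B Z₀ Z₁ hindep hB1 hB0 hZ₀law
    hZ₁law Q hQ τ'
end
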